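/- The matrix W = W^old (Σ_{i∈E} c*ᵢ cᵢᵀ + λ₁ Σ_{j∈P} cⱼ cⱼᵀ + λ₂ I)(Σ_{i∈E} cᵢ cᵢᵀ + λ₁ Σ_{j∈P} cⱼ cⱼᵀ + λ₂ I)⁻¹ is the unique global minimizer of the objective L(W) = Σ_{i∈E} ‖W cᵢ − W^old c*ᵢ‖₂² + λ₁ Σ_{j∈P} ‖W cⱼ − W^old cⱼ‖₂² + λ₂ ‖W − W^old‖_F². -/
import Mathlib


open Matrix BigOperators

lemma aux1 {m d : ℕ} (D M : Matrix (Fin m) (Fin d) ℝ) (u v : Fin d → ℝ) :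
    ∑ k, ∑ a, D k a * (M * Matrix.vecMulVec u v) k a
      = ∑ k, (D *ᵥ v) k * (M *ᵥ u) k := by
  refine Finset.sum_congr rfl fun k _ => ?_
  simp only [Matrix.mul_apply, Matrix.vecMulVec_apply, Matrix.mulVec, dotProduct,
    Finset.sum_mul, Finset.mul_sum]
  rw [Finset.sum_comm]
  exact Finset.sum_congr rfl fun b _ => Finset.sum_congr rfl fun a _ => by ring

lemma aux2 {m d : ℕ} {E P : Type*} [Fintype E] [Fintype P]
    (D M : Matrix (Fin m) (Fin d) ℝ) (u v : E → Fin d → ℝ) (w : P → Fin d → ℝ)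
    (l1 l2 : ℝ) :
    ∑ k, ∑ a, D k a * ((M * (∑ i, vecMulVec (u i) (v i) + l1 • ∑ j, vecMulVec (w j) (w j)
        + l2 • (1 : Matrix (Fin d) (Fin d) ℝ))) k a)
      = (∑ i, ∑ k, (D *ᵥ v i) k * (M *ᵥ u i) k)
        + l1 * (∑ j, ∑ k, (D *ᵥ w j) k * (M *ᵥ w j) k)
        + l2 * ∑ k, ∑ a, D k a * M k a := by
  have expand : ∀ k a, (M * (∑ i, vecMulVec (u i) (v i) + l1 • ∑ j, vecMulVec (w j) (w j)
      + l2 • (1 : Matrix (Fin d) (Fin d) ℝ))) k a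
      = (∑ i, (M * vecMulVec (u i) (v i)) k a) + l1 * (∑ j, (M * vecMulVec (w j) (w j)) k a)
        + l2 * M k a := by
    intro k a
    simp [Matrix.mul_add, Matrix.mul_sum, Matrix.mul_smul, Matrix.mul_one, Matrix.sum_apply]
  simp_rw [expand, mul_add, Finset.sum_add_distrib, Finset.mul_sum]
  congr 1
  · congr 1
    · have h : ∀ k : Fin m, ∑ a, ∑ i, D k a * (M * vecMulVec (u i) (v i)) k a
          = ∑ i, ∑ a, D k a * (M * vecMulVec (u i) (v i)) k a := fun k => Finset.sum_comm
      simp_rw [h]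
      rw [Finset.sum_comm]
      exact Finset.sum_congr rfl fun i _ => aux1 D M (u i) (v i)
    · have h : ∀ k : Fin m, ∑ a, ∑ j, D k a * (l1 * (M * vecMulVec (w j) (w j)) k a)
          = ∑ j, ∑ a, D k a * (l1 * (M * vecMulVec (w j) (w j)) k a) := fun k => Finset.sum_comm
      simp_rw [h]
      rw [Finset.sum_comm]
      refine Finset.sum_congr rfl fun j _ => ?_
      simp_rw [mul_left_comm _ l1, ← Finset.mul_sum]
      rw [aux1 D M (w j) (w j)]
  · simp_rw [mul_left_comm _ l2]

lemma auxq {d : ℕ} {I : Type*} [Fintype I] (c : I → Fin d → ℝ) (x : Fin d → ℝ) :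
    x ⬝ᵥ ((∑ i, vecMulVec (c i) (c i)) *ᵥ x) = ∑ i, (c i ⬝ᵥ x) ^ 2 := by
  simp only [mulVec, dotProduct, Matrix.sum_apply, vecMulVec_apply]
  have h : ∀ k, x k * ∑ b, (∑ i, c i k * c i b) * x b
      = ∑ i, (c i k * x k) * ∑ b, c i b * x b := by
    intro k
    calc x k * ∑ b, (∑ i, c i k * c i b) * x b
        = ∑ b, ∑ i, x k * (c i k * c i b * x b) := by
          rw [Finset.mul_sum]
          refine Finset.sum_congr rfl fun b _ => ?_
          rw [Finset.sum_mul, Finset.mul_sum]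
      _ = ∑ i, ∑ b, x k * (c i k * c i b * x b) := Finset.sum_comm
      _ = ∑ i, (c i k * x k) * ∑ b, c i b * x b := Finset.sum_congr rfl fun i _ => by
            rw [Finset.mul_sum]
            exact Finset.sum_congr rfl fun b _ => by ring
  simp_rw [h]
  rw [Finset.sum_comm]
  refine Finset.sum_congr rfl fun i _ => ?_
  rw [← Finset.sum_mul]
  ring

lemma quadform {d : ℕ} {E P : Type*} [Fintype E] [Fintype P]
    (cE : E → Fin d → ℝ) (cP : P → Fin d → ℝ) (l1 l2 : ℝ) (x : Fin d → ℝ) :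
    x ⬝ᵥ ((∑ i, vecMulVec (cE i) (cE i) + l1 • ∑ j, vecMulVec (cP j) (cP j)
        + l2 • (1 : Matrix (Fin d) (Fin d) ℝ)) *ᵥ x)
      = (∑ i, (cE i ⬝ᵥ x) ^ 2) + l1 * (∑ j, (cP j ⬝ᵥ x) ^ 2) + l2 * ∑ k, x k ^ 2 := by
  rw [Matrix.add_mulVec, Matrix.add_mulVec, Matrix.smul_mulVec, Matrix.smul_mulVec,
    Matrix.one_mulVec, dotProduct_add, dotProduct_add, dotProduct_smul, dotProduct_smul,
    auxq, auxq, smul_eq_mul, smul_eq_mul]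
  congr 1
  simp [dotProduct, sq]

lemma sum2_expand {α β : Type*} [Fintype α] [Fintype β] (f g : α → β → ℝ) :
    ∑ i, ∑ k, (f i k + g i k)^2 = (∑ i, ∑ k, (f i k)^2) + (∑ i, ∑ k, (g i k)^2)
      + 2 * ∑ i, ∑ k, g i k * f i k := by
  rw [Finset.mul_sum, ← Finset.sum_add_distrib, ← Finset.sum_add_distrib]
  refine Finset.sum_congr rfl fun i _ => ?_
  rw [Finset.mul_sum, ← Finset.sum_add_distrib, ← Finset.sum_add_distrib]
  exact Finset.sum_congr rfl fun k _ => by ring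

/-- `W = W^old (Σᵢ c*ᵢcᵢᵀ + λ₁ Σⱼ cⱼcⱼᵀ + λ₂ I)(Σᵢ cᵢcᵢᵀ + λ₁ Σⱼ cⱼcⱼᵀ + λ₂ I)⁻¹` is the
unique global minimizer of
`L(W) = Σᵢ ‖Wcᵢ − W^old c*ᵢ‖₂² + λ₁ Σⱼ ‖Wcⱼ − W^old cⱼ‖₂² + λ₂ ‖W − W^old‖_F²`. -/
theorem stmt_12 {m d : ℕ} {E P : Type*} [Fintype E] [Fintype P]
    (Wold : Matrix (Fin m) (Fin d) ℝ)
    (cE cstar : E → Fin d → ℝ) (cP : P → Fin d → ℝ)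
    (l1 l2 : ℝ) (hl1 : 0 ≤ l1) (hl2 : 0 < l2)
    (L : Matrix (Fin m) (Fin d) ℝ → ℝ)
    (hL : L = fun W => (∑ i, ∑ k, ((W *ᵥ cE i - Wold *ᵥ cstar i) k) ^ 2)
        + l1 * ∑ j, ∑ k, ((W *ᵥ cP j - Wold *ᵥ cP j) k) ^ 2
        + l2 * ∑ i, ∑ j, ((W - Wold) i j) ^ 2)
    (W : Matrix (Fin m) (Fin d) ℝ)
    (hW : W = Wold * (∑ i, vecMulVec (cstar i) (cE i) + l1 • ∑ j, vecMulVec (cP j) (cP j)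
        + l2 • (1 : Matrix (Fin d) (Fin d) ℝ))
        * (∑ i, vecMulVec (cE i) (cE i) + l1 • ∑ j, vecMulVec (cP j) (cP j)
        + l2 • (1 : Matrix (Fin d) (Fin d) ℝ))⁻¹) :
    ∀ X : Matrix (Fin m) (Fin d) ℝ, X ≠ W → L W < L X := by
  intro X hX
  set A : Matrix (Fin d) (Fin d) ℝ :=
    ∑ i, vecMulVec (cE i) (cE i) + l1 • ∑ j, vecMulVec (cP j) (cP j)
      + l2 • (1 : Matrix (Fin d) (Fin d) ℝ) with hA
  set B : Matrix (Fin d) (Fin d) ℝ :=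
    ∑ i, vecMulVec (cstar i) (cE i) + l1 • ∑ j, vecMulVec (cP j) (cP j)
      + l2 • (1 : Matrix (Fin d) (Fin d) ℝ) with hB
  have hdet : IsUnit A.det := by
    rw [isUnit_iff_ne_zero]
    intro h0
    obtain ⟨v, hv0, hv⟩ := Matrix.exists_mulVec_eq_zero_iff.mpr h0
    have hq := quadform cE cP l1 l2 v
    rw [← hA, hv, dotProduct_zero] at hq
    have hv1 : ∃ k, v k ≠ 0 := by
      by_contra hc
      push_neg at hc
      exact hv0 (funext hc)
    obtain ⟨k0, hk0⟩ := hv1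
    have h1 : 0 < ∑ k, v k ^ 2 :=
      Finset.sum_pos' (fun k _ => sq_nonneg _) ⟨k0, Finset.mem_univ _, by positivity⟩
    have h2 : 0 ≤ ∑ i, (cE i ⬝ᵥ v) ^ 2 := Finset.sum_nonneg fun i _ => sq_nonneg _
    have h3 : 0 ≤ l1 * ∑ j, (cP j ⬝ᵥ v) ^ 2 :=
      mul_nonneg hl1 (Finset.sum_nonneg fun j _ => sq_nonneg _)
    nlinarith [mul_pos hl2 h1]
  have hWA : W * A = Wold * B := by
    rw [hW, Matrix.mul_assoc, Matrix.nonsing_inv_mul A hdet, Matrix.mul_one]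
  set D : Matrix (Fin m) (Fin d) ℝ := X - W with hD
  have hXW : X = W + D := by rw [hD]; abel
  have hD0 : D ≠ 0 := sub_ne_zero_of_ne hX
  have hcross : (∑ i, ∑ k, (D *ᵥ cE i) k * ((W *ᵥ cE i) k - (Wold *ᵥ cstar i) k))
      + l1 * (∑ j, ∑ k, (D *ᵥ cP j) k * ((W *ᵥ cP j) k - (Wold *ᵥ cP j) k))
      + l2 * (∑ k, ∑ a, D k a * (W k a - Wold k a)) = 0 := by
    have hsub : (∑ i, ∑ k, (D *ᵥ cE i) k * ((W *ᵥ cE i) k - (Wold *ᵥ cstar i) k))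
        + l1 * (∑ j, ∑ k, (D *ᵥ cP j) k * ((W *ᵥ cP j) k - (Wold *ᵥ cP j) k))
        + l2 * (∑ k, ∑ a, D k a * (W k a - Wold k a))
        = ((∑ i, ∑ k, (D *ᵥ cE i) k * (W *ᵥ cE i) k)
            + l1 * (∑ j, ∑ k, (D *ᵥ cP j) k * (W *ᵥ cP j) k)
            + l2 * ∑ k, ∑ a, D k a * W k a)
          - ((∑ i, ∑ k, (D *ᵥ cE i) k * (Wold *ᵥ cstar i) k)
            + l1 * (∑ j, ∑ k, (D *ᵥ cP j) k * (Wold *ᵥ cP j) k)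
            + l2 * ∑ k, ∑ a, D k a * Wold k a) := by
      simp only [mul_sub, Finset.sum_sub_distrib]
      ring
    rw [hsub, ← aux2 D W cE cE cP l1 l2, ← aux2 D Wold cstar cE cP l1 l2, ← hA, ← hB,
      hWA, sub_self]
  have e1 : ∑ i, ∑ k, (((W + D) *ᵥ cE i) k - (Wold *ᵥ cstar i) k) ^ 2
      = (∑ i, ∑ k, ((W *ᵥ cE i) k - (Wold *ᵥ cstar i) k) ^ 2)
        + (∑ i, ∑ k, ((D *ᵥ cE i) k) ^ 2)
        + 2 * ∑ i, ∑ k, (D *ᵥ cE i) k * ((W *ᵥ cE i) k - (Wold *ᵥ cstar i) k) := by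
    have hpt : ∀ (i : E) (k : Fin m), ((W + D) *ᵥ cE i) k - (Wold *ᵥ cstar i) k
        = (((W *ᵥ cE i) k - (Wold *ᵥ cstar i) k) + (D *ᵥ cE i) k) := by
      intro i k
      rw [Matrix.add_mulVec, Pi.add_apply]
      ring
    simp_rw [hpt]
    exact sum2_expand (fun i k => (W *ᵥ cE i) k - (Wold *ᵥ cstar i) k)
      (fun i k => (D *ᵥ cE i) k)
  have e2 : ∑ j, ∑ k, (((W + D) *ᵥ cP j) k - (Wold *ᵥ cP j) k) ^ 2
      = (∑ j, ∑ k, ((W *ᵥ cP j) k - (Wold *ᵥ cP j) k) ^ 2)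
        + (∑ j, ∑ k, ((D *ᵥ cP j) k) ^ 2)
        + 2 * ∑ j, ∑ k, (D *ᵥ cP j) k * ((W *ᵥ cP j) k - (Wold *ᵥ cP j) k) := by
    have hpt : ∀ (j : P) (k : Fin m), ((W + D) *ᵥ cP j) k - (Wold *ᵥ cP j) k
        = (((W *ᵥ cP j) k - (Wold *ᵥ cP j) k) + (D *ᵥ cP j) k) := by
      intro j k
      rw [Matrix.add_mulVec, Pi.add_apply]
      ring
    simp_rw [hpt]
    exact sum2_expand (fun j k => (W *ᵥ cP j) k - (Wold *ᵥ cP j) k)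
      (fun j k => (D *ᵥ cP j) k)
  have e3 : ∑ k, ∑ a, (W k a + D k a - Wold k a) ^ 2
      = (∑ k, ∑ a, (W k a - Wold k a) ^ 2) + (∑ k, ∑ a, (D k a) ^ 2)
        + 2 * ∑ k, ∑ a, D k a * (W k a - Wold k a) := by
    have hpt : ∀ (k : Fin m) (a : Fin d), W k a + D k a - Wold k a
        = ((W k a - Wold k a) + D k a) := by
      intro k a; ring
    simp_rw [hpt]
    exact sum2_expand (fun k a => W k a - Wold k a) (fun k a => D k a)
  have key : L X = L W + ((∑ i, ∑ k, ((D *ᵥ cE i) k) ^ 2)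
      + l1 * (∑ j, ∑ k, ((D *ᵥ cP j) k) ^ 2) + l2 * ∑ k, ∑ a, (D k a) ^ 2) := by
    have hmain : L X = L W + ((∑ i, ∑ k, ((D *ᵥ cE i) k) ^ 2)
        + l1 * (∑ j, ∑ k, ((D *ᵥ cP j) k) ^ 2) + l2 * ∑ k, ∑ a, (D k a) ^ 2)
        + 2 * ((∑ i, ∑ k, (D *ᵥ cE i) k * ((W *ᵥ cE i) k - (Wold *ᵥ cstar i) k))
          + l1 * (∑ j, ∑ k, (D *ᵥ cP j) k * ((W *ᵥ cP j) k - (Wold *ᵥ cP j) k))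
          + l2 * (∑ k, ∑ a, D k a * (W k a - Wold k a))) := by
      simp only [hL]
      rw [hXW]
      simp only [Pi.sub_apply, Matrix.sub_apply, Matrix.add_apply]
      rw [e1, e2, e3]
      ring
    rw [hmain, hcross]
    ring
  have hdne : ∃ k a, D k a ≠ 0 := by
    by_contra hc
    push_neg at hc
    exact hD0 (Matrix.ext fun k a => hc k a)
  obtain ⟨k0, a0, hka⟩ := hdne
  have hin : 0 < ∑ a, (D k0 a) ^ 2 :=
    Finset.sum_pos' (fun a _ => sq_nonneg _) ⟨a0, Finset.mem_univ _, by positivity⟩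
  have hfro : 0 < ∑ k, ∑ a, (D k a) ^ 2 :=
    Finset.sum_pos' (fun k _ => Finset.sum_nonneg fun a _ => sq_nonneg _)
      ⟨k0, Finset.mem_univ _, hin⟩
  have h1 : 0 ≤ ∑ i, ∑ k, ((D *ᵥ cE i) k) ^ 2 :=
    Finset.sum_nonneg fun i _ => Finset.sum_nonneg fun k _ => sq_nonneg _
  have h2 : 0 ≤ l1 * ∑ j, ∑ k, ((D *ᵥ cP j) k) ^ 2 :=
    mul_nonneg hl1 (Finset.sum_nonneg fun j _ => Finset.sum_nonneg fun k _ => sq_nonneg _)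
  nlinarith [mul_pos hl2 hfro]
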